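/- Let X be a random variable on a discrete probability space with finite range 𝒳 and let ρ be a random state on a finite-dimensional complex Hilbert space, defined on the same probability space. Then d(X | ρ) ≤ (1/2) · 2^{S₀([ρ])/2} · √( |𝒳| · D(X | ρ) ). -/

import Mathlib

open Matrix
open scoped Kronecker ComplexOrder

noncomputable section

/-- A density operator: positive semidefinite with trace one. -/
def IsDensityOp {d : Type*} [Fintype d] [DecidableEq d] (ρ : Matrix d d ℂ) : Prop :=
  ρ.PosSemidef ∧ ρ.trace = 1

/-- The operator absolute value `|A| = (A Aᴴ)^(1/2)`. -/
noncomputable def matAbs {d : Type*} [Fintype d] [DecidableEq d] (A : Matrix d d ℂ) :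
    Matrix d d ℂ :=
  (Matrix.posSemidef_self_mul_conjTranspose A).1.eigenvectorUnitary.1 *
    Matrix.diagonal (((↑) : ℝ → ℂ) ∘ Real.sqrt ∘
      (Matrix.posSemidef_self_mul_conjTranspose A).1.eigenvalues) *
    (star (Matrix.posSemidef_self_mul_conjTranspose A).1.eigenvectorUnitary : Matrix d d ℂ)

/-- Trace distance `δ(ρ,σ) = (1/2) tr|ρ-σ|`. -/
noncomputable def traceDist {d : Type*} [Fintype d] [DecidableEq d]
    (ρ σ : Matrix d d ℂ) : ℝ :=
  (1 / 2) * (matAbs (ρ - σ)).trace.re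

/-- Squared Hilbert-Schmidt distance `Δ(ρ,σ) = tr((ρ-σ)²)`. -/
noncomputable def hsDistSq {d : Type*} [Fintype d] [DecidableEq d]
    (ρ σ : Matrix d d ℂ) : ℝ :=
  ((ρ - σ) * (ρ - σ)).trace.re

/-- Expectation of a random state. -/
noncomputable def expState {Ω d : Type*} [Fintype d]
    (P : Ω → ℝ) (ρ : Ω → Matrix d d ℂ) : Matrix d d ℂ :=
  ∑' ω, P ω • ρ ω

/-- Probability of an event. -/
noncomputable def prEvent {Ω : Type*} (P : Ω → ℝ) (E : Set Ω) : ℝ :=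
  ∑' ω, E.indicator P ω

/-- Conditional expectation `[ρ | E]` of a random state given an event. -/
noncomputable def condExpState {Ω d : Type*} [Fintype d]
    (P : Ω → ℝ) (ρ : Ω → Matrix d d ℂ) (E : Set Ω) : Matrix d d ℂ :=
  (prEvent P E)⁻¹ • ∑' ω, E.indicator (fun ω => P ω • ρ ω) ω

/-- The classical state `|x⟩⟨x|`. -/
noncomputable def classicalState {𝒳 : Type*} [Fintype 𝒳] [DecidableEq 𝒳] (x : 𝒳) :
    Matrix 𝒳 𝒳 ℂ :=
  Matrix.single x x 1

/-- The fully mixed state on `𝒳`. -/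
noncomputable def uniformState (𝒳 : Type*) [Fintype 𝒳] [DecidableEq 𝒳] : Matrix 𝒳 𝒳 ℂ :=
  (Fintype.card 𝒳 : ℂ)⁻¹ • (1 : Matrix 𝒳 𝒳 ℂ)

/-- Non-uniformity `d(X|ρ) = δ([{X} ⊗ ρ], [{U}] ⊗ [ρ])`. -/
noncomputable def nonUnif {Ω 𝒳 d : Type*} [Fintype 𝒳] [DecidableEq 𝒳]
    [Fintype d] [DecidableEq d]
    (P : Ω → ℝ) (X : Ω → 𝒳) (ρ : Ω → Matrix d d ℂ) : ℝ :=
  traceDist (expState P (fun ω => classicalState (X ω) ⊗ₖ ρ ω))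
    (uniformState 𝒳 ⊗ₖ expState P ρ)

/-- `D(X|ρ) = Δ([{X} ⊗ ρ], [{U}] ⊗ [ρ])`. -/
noncomputable def DNonUnif {Ω 𝒳 d : Type*} [Fintype 𝒳] [DecidableEq 𝒳]
    [Fintype d] [DecidableEq d]
    (P : Ω → ℝ) (X : Ω → 𝒳) (ρ : Ω → Matrix d d ℂ) : ℝ :=
  hsDistSq (expState P (fun ω => classicalState (X ω) ⊗ₖ ρ ω))
    (uniformState 𝒳 ⊗ₖ expState P ρ)

/-- Rényi entropy of order 0: `log₂ rank ρ`. -/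
noncomputable def renyiS0 {d : Type*} [Fintype d] [DecidableEq d] (ρ : Matrix d d ℂ) : ℝ :=
  Real.logb 2 (ρ.rank)

/-- Rényi entropy of order 2: `-log₂ tr(ρ²)`. -/
noncomputable def renyiS2 {d : Type*} [Fintype d] [DecidableEq d] (ρ : Matrix d d ℂ) : ℝ :=
  -Real.logb 2 ((ρ * ρ).trace.re)

/-- Maximal eigenvalue of a Hermitian matrix. -/
noncomputable def lambdaMax {d : Type*} [Fintype d] [DecidableEq d] (ρ : Matrix d d ℂ) : ℝ :=
  if h : ρ.IsHermitian then ⨆ i, h.eigenvalues i else 0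

/-- Von Neumann entropy `S(ρ) = -tr(ρ log₂ ρ)` (in bits). -/
noncomputable def vnEntropy {d : Type*} [Fintype d] [DecidableEq d] (ρ : Matrix d d ℂ) : ℝ :=
  if h : ρ.IsHermitian then -∑ i, h.eigenvalues i * Real.logb 2 (h.eigenvalues i) else 0

/-- Smooth Rényi entropy of order 0. -/
noncomputable def smoothS0 {d : Type*} [Fintype d] [DecidableEq d]
    (ε : ℝ) (ρ : Matrix d d ℂ) : ℝ :=
  sInf {x : ℝ | ∃ σ : Matrix d d ℂ,
    IsDensityOp σ ∧ traceDist ρ σ ≤ ε ∧ x = Real.logb 2 (σ.rank)}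

/-- Smooth Rényi entropy of order ∞. -/
noncomputable def smoothSinf {d : Type*} [Fintype d] [DecidableEq d]
    (ε : ℝ) (ρ : Matrix d d ℂ) : ℝ :=
  sSup {x : ℝ | ∃ σ : Matrix d d ℂ,
    IsDensityOp σ ∧ traceDist ρ σ ≤ ε ∧ x = -Real.logb 2 (lambdaMax σ)}

/-! Write `M := [{X} ⊗ ρ] - [{U}] ⊗ [ρ]`, so that `d(X|ρ) = tr|M| / 2` and `D(X|ρ) = tr M²`.
For a Hermitian matrix, Cauchy–Schwarz over its nonzero eigenvalues gives
`tr|M| = ∑ |λᵢ| ≤ √(rank M · ∑ λᵢ²) = √(rank M · tr M²)`. In the Loewner order both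
`[{X} ⊗ ρ]` and `[{U}] ⊗ [ρ]` lie between `0` and `1 ⊗ [ρ]`, so `M` vanishes on the kernel of
`1 ⊗ [ρ]` and `rank M ≤ rank (1 ⊗ [ρ]) = |𝒳| · rank [ρ] = |𝒳| · 2^{S₀([ρ])}`. -/

/- The L2 operator norm makes `Matrix n n ℂ` a C⋆-algebra: the Loewner order is then closed,
and a probability mixture of density operators is summable since each has norm at most one. -/
open scoped MatrixOrder Matrix.Norms.L2Operator

lemma Summable.of_tsum_ne_zero {ι α : Type*} [AddCommMonoid α] [TopologicalSpace α]
    {f : ι → α} (h : ∑' i, f i ≠ 0) : Summable f := by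
  by_contra hf
  exact h (tsum_eq_zero_of_not_summable hf)

lemma Real.sum_abs_le_sqrt_card_mul_sum_sq {ι : Type*} [Fintype ι] (f : ι → ℝ) :
    ∑ i, |f i| ≤ √(Fintype.card {i // f i ≠ 0} * ∑ i, f i ^ 2) := by
  classical
  have hsupp : ∀ g : ℝ → ℝ, g 0 = 0 → ∑ i, g (f i) = ∑ i with f i ≠ 0, g (f i) := fun g hg =>
    (Finset.sum_filter_of_ne (p := fun i => f i ≠ 0) fun i _ h hf => h (by rw [hf, hg])).symm
  rw [hsupp _ abs_zero, hsupp (· ^ 2) (by simp), Fintype.card_subtype]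
  refine Real.le_sqrt_of_sq_le (sq_sum_le_card_mul_sum_sq.trans_eq ?_)
  simp_rw [sq_abs]

lemma Real.two_rpow_logb_div_two {r : ℝ} (hr : 0 < r) : (2 : ℝ) ^ (Real.logb 2 r / 2) = √r := by
  rw [div_eq_mul_one_div, Real.rpow_mul zero_le_two, Real.rpow_logb two_pos (by norm_num) hr,
    Real.sqrt_eq_rpow]

namespace Matrix

lemma rank_le_rank_of_mulVec_eq_zero {K m n : Type*} [Field K] [Fintype n] {A B : Matrix m n K}
    (h : ∀ v, B *ᵥ v = 0 → A *ᵥ v = 0) : A.rank ≤ B.rank := by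
  have hker : LinearMap.ker B.mulVecLin ≤ LinearMap.ker A.mulVecLin := fun v hv => h v hv
  have hA := LinearMap.finrank_range_add_finrank_ker A.mulVecLin
  have hB := LinearMap.finrank_range_add_finrank_ker B.mulVecLin
  have := Submodule.finrank_mono hker
  unfold rank
  omega

variable {𝕜 m n : Type*} [RCLike 𝕜] [Fintype n]

lemma PosSemidef.mulVec_eq_zero_of_le {S R : Matrix n n 𝕜} (hS : S.PosSemidef) (hSR : S ≤ R)
    {v : n → 𝕜} (hv : R *ᵥ v = 0) : S *ᵥ v = 0 := by
  have hRS := (le_iff.1 hSR).dotProduct_mulVec_nonneg v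
  rw [sub_mulVec, dotProduct_sub, hv, dotProduct_zero, zero_sub, neg_nonneg] at hRS
  exact (hS.dotProduct_mulVec_zero_iff v).1 (le_antisymm hRS (hS.dotProduct_mulVec_nonneg v))

lemma IsHermitian.re_trace_mul_self_nonneg {A : Matrix n n ℂ} (hA : A.IsHermitian) :
    0 ≤ (A * A).trace.re := by
  have h := (posSemidef_self_mul_conjTranspose A).trace_nonneg
  rw [hA.eq] at h
  exact (Complex.nonneg_iff.1 h).1

variable [Fintype m] [DecidableEq m]

lemma kronecker_le_one_kronecker {σ : Matrix m m 𝕜} {τ : Matrix n n 𝕜} (hσ : σ ≤ 1)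
    (hτ : τ.PosSemidef) : σ ⊗ₖ τ ≤ 1 ⊗ₖ τ := by
  have h : (1 - σ) ⊗ₖ τ = 1 ⊗ₖ τ - σ ⊗ₖ τ := by
    rw [eq_sub_iff_add_eq, ← add_kronecker, sub_add_cancel]
  exact le_iff.2 (h ▸ (le_iff.1 hσ).kronecker hτ)

variable [DecidableEq n]

lemma IsHermitian.trace_cfc {A : Matrix n n 𝕜} (hA : A.IsHermitian) (f : ℝ → ℝ) :
    (cfc f A).trace = ∑ i, (f (hA.eigenvalues i) : 𝕜) := by
  rw [hA.cfc_eq, IsHermitian.cfc, Unitary.conjStarAlgAut_apply, trace_mul_cycle,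
    Unitary.coe_star_mul_self, one_mul, trace_diagonal]
  rfl

lemma IsHermitian.rank_one_kronecker {B : Matrix n n 𝕜} (hB : B.IsHermitian) :
    ((1 : Matrix m m 𝕜) ⊗ₖ B).rank = Fintype.card m * B.rank := by
  set U := hB.eigenvectorUnitary
  have hU : (1 ⊗ₖ (U : Matrix n n 𝕜) : Matrix (m × n) (m × n) 𝕜) *
      (1 ⊗ₖ star (U : Matrix n n 𝕜)) = 1 := by
    rw [← mul_kronecker_mul, mul_one, ← Unitary.coe_star, Unitary.coe_mul_star_self,
      one_kronecker_one]
  have hspec : (1 : Matrix m m 𝕜) ⊗ₖ B = (1 ⊗ₖ (U : Matrix n n 𝕜)) *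
      (1 ⊗ₖ diagonal (RCLike.ofReal ∘ hB.eigenvalues)) * (1 ⊗ₖ star (U : Matrix n n 𝕜)) := by
    rw [← mul_kronecker_mul, ← mul_kronecker_mul, mul_one, mul_one]
    conv_lhs => rw [hB.spectral_theorem]
    rfl
  rw [hspec, rank_mul_eq_left_of_isUnit_det _ _ (isUnit_det_of_left_inverse hU),
    rank_mul_eq_right_of_isUnit_det _ _ (isUnit_det_of_right_inverse hU), ← diagonal_one,
    diagonal_kronecker_diagonal, rank_diagonal, hB.rank_eq_card_non_zero_eigs,
    Fintype.card_subtype, Fintype.card_subtype, ← Finset.card_univ, ← Finset.card_product]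
  congr 1
  ext
  simp

end Matrix

section MatAbs

variable {n : Type*} [Fintype n] [DecidableEq n]

lemma matAbs_eq_cfcSqrt (A : Matrix n n ℂ) : matAbs A = CFC.sqrt (A * Aᴴ) := by
  have hA := Matrix.posSemidef_self_mul_conjTranspose A
  rw [CFC.sqrt_eq_cfc, cfc_nnreal_eq_real _ _ hA.nonneg, hA.1.cfc_eq]
  simp only [IsHermitian.cfc, matAbs, Unitary.conjStarAlgAut_apply]
  congr 3
  funext i
  simp [max_eq_left (hA.eigenvalues_nonneg i)]

lemma Matrix.IsHermitian.matAbs_eq_cfc_abs {A : Matrix n n ℂ} (hA : A.IsHermitian) :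
    matAbs A = cfc (fun x : ℝ => |x|) A := by
  have hAA : A * Aᴴ = star A * A := by rw [hA.eq, star_eq_conjTranspose, hA.eq]
  rw [matAbs_eq_cfcSqrt, hAA, ← CFC.abs, CFC.abs_eq_cfc_norm A hA]
  rfl

lemma Matrix.IsHermitian.re_trace_matAbs_le {A : Matrix n n ℂ} (hA : A.IsHermitian) :
    (matAbs A).trace.re ≤ √(A.rank * (A * A).trace.re) := by
  have habs : (matAbs A).trace.re = ∑ i, |hA.eigenvalues i| := by
    simp [hA.matAbs_eq_cfc_abs, hA.trace_cfc]
  have hsq : (A * A).trace.re = ∑ i, hA.eigenvalues i ^ 2 := by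
    rw [← sq, ← cfc_pow_id (R := ℝ) A 2 hA.isSelfAdjoint, hA.trace_cfc, Complex.re_sum]
    exact Finset.sum_congr rfl fun i _ => Complex.ofReal_re _
  rw [habs, hsq, hA.rank_eq_card_non_zero_eigs]
  exact Real.sum_abs_le_sqrt_card_mul_sum_sq _

end MatAbs

section DensityOp

variable {m n : Type*} [Fintype m] [DecidableEq m] [Fintype n] [DecidableEq n]

lemma IsDensityOp.le_one {σ : Matrix n n ℂ} (hσ : IsDensityOp σ) : σ ≤ 1 := by
  have hH := hσ.1.isHermitian
  have htr : ∑ j, hH.eigenvalues j = 1 := by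
    simpa [hσ.2] using (congrArg Complex.re hH.trace_eq_sum_eigenvalues).symm
  rw [← map_one (algebraMap ℝ (Matrix n n ℂ)), le_algebraMap_iff_spectrum_le hH.isSelfAdjoint,
    hH.spectrum_real_eq_range_eigenvalues]
  rintro _ ⟨i, rfl⟩
  exact htr ▸ Finset.single_le_sum (fun j _ => hσ.1.eigenvalues_nonneg j) (Finset.mem_univ i)

lemma IsDensityOp.norm_le_one {σ : Matrix n n ℂ} (hσ : IsDensityOp σ) : ‖σ‖ ≤ 1 :=
  (CStarAlgebra.norm_le_one_iff_of_nonneg σ hσ.1.nonneg).2 hσ.le_one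

lemma IsDensityOp.rank_pos {σ : Matrix n n ℂ} (hσ : IsDensityOp σ) : 0 < σ.rank := by
  have hH := hσ.1.isHermitian
  rw [hH.rank_eq_card_non_zero_eigs, Fintype.card_pos_iff, nonempty_subtype]
  by_contra! h
  have : σ = 0 := hH.eigenvalues_eq_zero_iff.1 (funext h)
  simpa [this] using hσ.2

lemma IsDensityOp.kronecker {σ : Matrix m m ℂ} {τ : Matrix n n ℂ} (hσ : IsDensityOp σ)
    (hτ : IsDensityOp τ) : IsDensityOp (σ ⊗ₖ τ) :=
  ⟨hσ.1.kronecker hτ.1, by rw [trace_kronecker, hσ.2, hτ.2, one_mul]⟩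

lemma isDensityOp_classicalState (x : n) : IsDensityOp (classicalState x) := by
  refine ⟨?_, trace_single_eq_same x 1⟩
  rw [classicalState, ← diagonal_single]
  exact PosSemidef.diagonal (Pi.single_nonneg.2 zero_le_one)

variable {ι : Type*} {P : ι → ℝ}

lemma summable_smul_of_isDensityOp (hPs : Summable P) (hP : ∀ i, 0 ≤ P i)
    {σ : ι → Matrix n n ℂ} (hσ : ∀ i, IsDensityOp (σ i)) : Summable fun i => P i • σ i :=
  hPs.of_norm_bounded fun i => by
    rw [norm_smul, Real.norm_of_nonneg (hP i)]
    exact mul_le_of_le_one_right (hP i) (hσ i).norm_le_one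

lemma isDensityOp_tsum (hP : ∀ i, 0 ≤ P i) (hP1 : ∑' i, P i = 1) {σ : ι → Matrix n n ℂ}
    (hσ : ∀ i, IsDensityOp (σ i)) : IsDensityOp (∑' i, P i • σ i) := by
  have hS := summable_smul_of_isDensityOp (.of_tsum_ne_zero (hP1 ▸ one_ne_zero)) hP hσ
  refine ⟨(tsum_nonneg fun i => smul_nonneg (hP i) (hσ i).1.nonneg).posSemidef, ?_⟩
  rw [← traceLinearMap_apply n ℂ ℂ, ← LinearMap.coe_toContinuousLinearMap',
    ContinuousLinearMap.map_tsum _ hS]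
  simp only [LinearMap.coe_toContinuousLinearMap', traceLinearMap_apply, trace_smul, (hσ _).2,
    Complex.real_smul, mul_one]
  rw [← Complex.ofReal_tsum, hP1, Complex.ofReal_one]

lemma tsum_smul_kronecker_le (hPs : Summable P) (hP : ∀ i, 0 ≤ P i)
    {σ : ι → Matrix m m ℂ} {τ : ι → Matrix n n ℂ} (hσ : ∀ i, IsDensityOp (σ i))
    (hτ : ∀ i, IsDensityOp (τ i)) :
    ∑' i, P i • (σ i ⊗ₖ τ i) ≤ 1 ⊗ₖ ∑' i, P i • τ i := by
  let K := (kroneckerBilinear (R := ℂ) (1 : Matrix m m ℂ) :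
    Matrix n n ℂ →ₗ[ℂ] Matrix (m × n) (m × n) ℂ).toContinuousLinearMap
  refine hasSum_le (fun i => ?_)
    (summable_smul_of_isDensityOp hPs hP fun i => (hσ i).kronecker (hτ i)).hasSum
    ((summable_smul_of_isDensityOp hPs hP hτ).hasSum.mapL K)
  change _ ≤ (1 : Matrix m m ℂ) ⊗ₖ (P i • τ i)
  rw [kronecker_smul]
  exact smul_le_smul_of_nonneg_left (kronecker_le_one_kronecker (hσ i).le_one (hτ i).1) (hP i)

end DensityOp

theorem stmt_7_general {Ω 𝒳 d : Type*} [Fintype 𝒳] [DecidableEq 𝒳]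
    [Fintype d] [DecidableEq d]
    (P : Ω → ℝ) (hP : ∀ ω, 0 ≤ P ω) (hP1 : ∑' ω, P ω = 1)
    (X : Ω → 𝒳) (ρ : Ω → Matrix d d ℂ) (hρ : ∀ ω, IsDensityOp (ρ ω)) :
    nonUnif P X ρ
      ≤ (1 / 2) * (2 : ℝ) ^ (renyiS0 (expState P ρ) / 2) *
          Real.sqrt ((Fintype.card 𝒳 : ℝ) * DNonUnif P X ρ) := by
  set T := expState P ρ
  set A := expState P fun ω => classicalState (X ω) ⊗ₖ ρ ω
  set M := A - uniformState 𝒳 ⊗ₖ T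
  have hX : ∀ ω, IsDensityOp (classicalState (X ω)) := fun ω => isDensityOp_classicalState _
  have hT : IsDensityOp T := isDensityOp_tsum hP hP1 hρ
  have hA : IsDensityOp A := isDensityOp_tsum hP hP1 fun ω => (hX ω).kronecker (hρ ω)
  have hUT : uniformState 𝒳 ⊗ₖ T = (Fintype.card 𝒳 : ℂ)⁻¹ • (1 ⊗ₖ T) := smul_kronecker _ _ _
  have hM : M.IsHermitian :=
    hA.1.1.sub (hUT ▸ ((PosSemidef.one.kronecker hT.1).smul (by positivity)).1)
  have hrank : M.rank ≤ Fintype.card 𝒳 * T.rank := by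
    rw [← hT.1.1.rank_one_kronecker]
    refine rank_le_rank_of_mulVec_eq_zero fun v hv => ?_
    have hAT := tsum_smul_kronecker_le (.of_tsum_ne_zero (hP1 ▸ one_ne_zero)) hP hX hρ
    rw [sub_mulVec, hA.1.mulVec_eq_zero_of_le hAT hv, hUT, smul_mulVec, hv, smul_zero, sub_zero]
  have hD : 0 ≤ DNonUnif P X ρ := hM.re_trace_mul_self_nonneg
  calc nonUnif P X ρ = 1 / 2 * (matAbs M).trace.re := rfl
    _ ≤ 1 / 2 * √(M.rank * DNonUnif P X ρ) := by gcongr; exact hM.re_trace_matAbs_le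
    _ ≤ 1 / 2 * √(Fintype.card 𝒳 * T.rank * DNonUnif P X ρ) := by gcongr; exact_mod_cast hrank
    _ = 1 / 2 * √(T.rank) * √(Fintype.card 𝒳 * DNonUnif P X ρ) := by
      rw [mul_assoc (1 / 2 : ℝ), ← Real.sqrt_mul (Nat.cast_nonneg _)]
      ring_nf
    _ = _ := by rw [renyiS0, Real.two_rpow_logb_div_two (by exact_mod_cast hT.rank_pos)]

/-- **Lemma 6.** `d(X|ρ) ≤ (1/2) 2^{S₀([ρ])/2} √(|𝒳| · D(X|ρ))`. -/
theorem stmt_7 {Ω 𝒳 d : Type*} [Countable Ω] [Fintype 𝒳] [DecidableEq 𝒳]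
    [Fintype d] [DecidableEq d]
    (P : Ω → ℝ) (hP : ∀ ω, 0 ≤ P ω) (hP1 : ∑' ω, P ω = 1)
    (X : Ω → 𝒳) (ρ : Ω → Matrix d d ℂ) (hρ : ∀ ω, IsDensityOp (ρ ω)) :
    nonUnif P X ρ
      ≤ (1 / 2) * (2 : ℝ) ^ (renyiS0 (expState P ρ) / 2) *
          Real.sqrt ((Fintype.card 𝒳 : ℝ) * DNonUnif P X ρ) :=
  stmt_7_general P hP hP1 X ρ hρ

end
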